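/- Let H be an N×N complex Hermitian matrix with H² = H, let |ψ0⟩ ∈ ℂ^N be a unit vector, ψ0 = |ψ0⟩⟨ψ0|, X0 := [H, ψ0], Y0 := i[H, X0]. Fix x, y ∈ ℝ. Then for every unitary U, the curve γ(t) := e^{i(ty/2)ψ0} e^{i(π/2)H} e^{−i(tx/2)ψ0} e^{−iπH} e^{i(tx/2)ψ0} e^{−i(π/2)H} e^{−i(ty/2)ψ0} e^{iπH} U (t ≥ 0) satisfies γ(0) = U, and γ is differentiable at t = 0 with γ′(0) = (x X0 + y Y0) U. (This is the 8-factor Grover-compatible retraction.) -/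

import Mathlib

open Matrix

attribute [local instance] Matrix.frobeniusNormedAddCommGroup Matrix.frobeniusNormedSpace

/-- The rank-one projector `|ψ⟩⟨ψ|` associated with a vector `ψ`. -/
noncomputable def rankOneProj {N : ℕ} (ψ : Fin N → ℂ) : Matrix (Fin N) (Fin N) ℂ :=
  Matrix.vecMulVec ψ (star ψ)

/-- The gate `e^{iθM}` for a matrix `M` and a real angle `θ`. -/
noncomputable def expGate {N : ℕ} (M : Matrix (Fin N) (Fin N) ℂ) (θ : ℝ) :
    Matrix (Fin N) (Fin N) ℂ :=
  NormedSpace.exp ((Complex.I * (θ : ℂ)) • M)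


/-!
At `t = 0` the `ψ₀`-gates are `1` and the four `H`-gates multiply to `e^{i(π/2 - π - π/2 + π)H} = 1`.
By the Leibniz rule, `γ'(0)` is a sum of four conjugates of `± (i x/2) ψ₀`, `± (i y/2) ψ₀` by products
of `H`-gates. Since `H` is idempotent, `e^{c H} = 1 - H + e^c H`, so these gates are the explicit
polynomials `1 - 2H` and `1 - H ± iH` in `H`, and expanding with `H² = H` leaves `x X₀ + y Y₀`.
-/

attribute [local instance] Matrix.frobeniusNormedRing Matrix.frobeniusNormedAlgebra

open NormedSpace

theorem NormedSpace.exp_smul_of_isIdempotentElem {𝔸 : Type*} [NormedRing 𝔸] [NormedAlgebra ℂ 𝔸]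
    [CompleteSpace 𝔸] {P : 𝔸} (hP : IsIdempotentElem P) (c : ℂ) :
    exp (c • P) = 1 - P + Complex.exp c • P := by
  have hc := ((exp_series_hasSum_exp' (𝕂 := ℂ) c).smul_const P).add (hasSum_ite_eq 0 (1 - P))
  refine (exp_series_hasSum_exp' (𝕂 := ℂ) (c • P)).unique ?_
  rw [← Complex.exp_eq_exp_ℂ, add_comm] at hc
  convert hc using 1
  funext n
  cases n with
  | zero => simp
  | succ n => simp [smul_pow, hP.pow_succ_eq, smul_smul]

section expGate

variable {N : ℕ}

theorem expGate_zero (M : Matrix (Fin N) (Fin N) ℂ) : expGate M 0 = 1 := by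
  simp [expGate]

theorem expGate_mul_expGate (M : Matrix (Fin N) (Fin N) ℂ) (θ₁ θ₂ : ℝ) :
    expGate M θ₁ * expGate M θ₂ = expGate M (θ₁ + θ₂) := by
  rw [expGate, expGate, expGate,
    ← Matrix.exp_add_of_commute _ _ (((Commute.refl M).smul_left _).smul_right _), ← add_smul]
  push_cast
  ring_nf

theorem hasDerivAt_expGate (M : Matrix (Fin N) (Fin N) ℂ) {θ : ℝ → ℝ} {θ' t : ℝ}
    (hθ : HasDerivAt θ θ' t) :
    HasDerivAt (fun s => expGate M (θ s)) (expGate M (θ t) * (Complex.I * θ') • M) t := by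
  have h := (hasDerivAt_exp_smul_const (𝕂 := ℝ) (Complex.I • M) (θ t)).scomp t hθ
  have hsmul : ∀ u : ℝ, u • Complex.I • M = (Complex.I * u) • M := fun u => by
    rw [← Complex.coe_smul, smul_smul, mul_comm]
  simp only [hsmul] at h
  refine h.congr_deriv ?_
  rw [expGate, mul_smul_comm, mul_smul_comm, ← Complex.coe_smul, smul_smul, mul_comm (θ' : ℂ)]
  -- the two sides differ only in the (defeq) topologies on matrices used by `exp`
  rfl

variable {H : Matrix (Fin N) (Fin N) ℂ}

theorem expGate_of_isIdempotentElem (hH : IsIdempotentElem H) (θ : ℝ) :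
    expGate H θ = 1 - H + Complex.exp (θ * Complex.I) • H := by
  rw [expGate, mul_comm]
  exact exp_smul_of_isIdempotentElem hH _

theorem expGate_pi_div_two (hH : IsIdempotentElem H) :
    expGate H (Real.pi / 2) = 1 - H + Complex.I • H := by
  simp [expGate_of_isIdempotentElem hH]

theorem expGate_neg_pi_div_two (hH : IsIdempotentElem H) :
    expGate H (-(Real.pi / 2)) = 1 - H - Complex.I • H := by
  simp [expGate_of_isIdempotentElem hH, Complex.exp_neg, sub_eq_add_neg]

theorem expGate_pi (hH : IsIdempotentElem H) : expGate H Real.pi = 1 - 2 • H := by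
  rw [expGate_of_isIdempotentElem hH, Complex.exp_pi_mul_I]
  module

theorem expGate_neg_pi (hH : IsIdempotentElem H) : expGate H (-Real.pi) = 1 - 2 • H := by
  rw [expGate_of_isIdempotentElem hH, Complex.ofReal_neg, neg_mul, Complex.exp_neg_pi_mul_I]
  module

end expGate

open Complex in
theorem grover_tangent_identity {A : Type*} [Ring A] [Algebra ℂ A] {H : A}
    (hH : IsIdempotentElem H) (P : A) (x y : ℂ) :
    ((((I * (y / 2)) • P * (1 - H + I • H) + (1 - H + I • H) * (I * -(x / 2)) • P) * (1 - 2 • H) +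
          (1 - H + I • H) * (1 - 2 • H) * (I * (x / 2)) • P) * (1 - H - I • H) +
        (1 - H + I • H) * (1 - 2 • H) * (1 - H - I • H) * (I * -(y / 2)) • P) * (1 - 2 • H) =
      x • (H * P - P * H) + y • I • (H * (H * P - P * H) - (H * P - P * H) * H) := by
  have hHH : ∀ B : A, H * (H * B) = H * B := fun B => by rw [← mul_assoc, hH.eq]
  simp only [mul_add, add_mul, sub_mul, mul_sub, smul_mul_assoc, mul_smul_comm, smul_smul,
    mul_assoc, hHH, hH.eq, one_mul, mul_one, two_smul]
  match_scalars <;> ring_nf <;> simp <;> ring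

theorem stmt_10_general {N : ℕ} (H : Matrix (Fin N) (Fin N) ℂ)
    (hProj : H * H = H)
    (ψ₀ : Fin N → ℂ)
    (X₀ Y₀ : Matrix (Fin N) (Fin N) ℂ)
    (hX₀ : X₀ = H * rankOneProj ψ₀ - rankOneProj ψ₀ * H)
    (hY₀ : Y₀ = Complex.I • (H * X₀ - X₀ * H))
    (x y : ℝ)
    (U : Matrix (Fin N) (Fin N) ℂ)
    (γ : ℝ → Matrix (Fin N) (Fin N) ℂ)
    (hγ : γ = fun t =>
      expGate (rankOneProj ψ₀) (t * y / 2) * expGate H (Real.pi / 2) *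
        expGate (rankOneProj ψ₀) (-(t * x / 2)) * expGate H (-Real.pi) *
        expGate (rankOneProj ψ₀) (t * x / 2) * expGate H (-(Real.pi / 2)) *
        expGate (rankOneProj ψ₀) (-(t * y / 2)) * expGate H Real.pi * U) :
    γ 0 = U ∧
    HasDerivWithinAt γ (((x : ℂ) • X₀ + (y : ℂ) • Y₀) * U) (Set.Ici (0 : ℝ)) 0 := by
  subst hγ hX₀ hY₀
  set P := rankOneProj ψ₀
  refine ⟨?_, ?_⟩
  · simp only [zero_mul, zero_div, neg_zero, expGate_zero, one_mul, mul_one]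
    rw [expGate_mul_expGate, expGate_mul_expGate, expGate_mul_expGate,
      show Real.pi / 2 + -Real.pi + -(Real.pi / 2) + Real.pi = 0 by ring, expGate_zero, one_mul]
  · have hangle : ∀ c : ℝ, HasDerivAt (fun t : ℝ => t * c / 2) (c / 2) 0 := fun c => by
      simpa using ((hasDerivAt_id (0 : ℝ)).mul_const c).div_const 2
    have hd := (((((((hasDerivAt_expGate P (hangle y)).mul_const (expGate H (Real.pi / 2))).mul
      (hasDerivAt_expGate P (θ := fun t => -(t * x / 2)) (hangle x).neg)).mul_const
      (expGate H (-Real.pi))).mul (hasDerivAt_expGate P (hangle x))).mul_const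
      (expGate H (-(Real.pi / 2)))).mul
      (hasDerivAt_expGate P (θ := fun t => -(t * y / 2)) (hangle y).neg)).mul_const
      (expGate H Real.pi) |>.mul_const U
    refine (hd.congr_deriv ?_).hasDerivWithinAt
    simp only [Pi.mul_apply, zero_mul, zero_div, neg_zero, expGate_zero, one_mul, mul_one,
      expGate_pi_div_two hProj, expGate_neg_pi_div_two hProj, expGate_pi hProj,
      expGate_neg_pi hProj]
    push_cast
    rw [grover_tangent_identity hProj]

theorem stmt_10 {N : ℕ} (H : Matrix (Fin N) (Fin N) ℂ)
    (hHerm : H.IsHermitian) (hProj : H * H = H)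
    (ψ₀ : Fin N → ℂ) (hψ₀ : star ψ₀ ⬝ᵥ ψ₀ = 1)
    (X₀ Y₀ : Matrix (Fin N) (Fin N) ℂ)
    (hX₀ : X₀ = H * rankOneProj ψ₀ - rankOneProj ψ₀ * H)
    (hY₀ : Y₀ = Complex.I • (H * X₀ - X₀ * H))
    (x y : ℝ)
    (U : Matrix (Fin N) (Fin N) ℂ) (hU : U ∈ Matrix.unitaryGroup (Fin N) ℂ)
    (γ : ℝ → Matrix (Fin N) (Fin N) ℂ)
    (hγ : γ = fun t =>
      expGate (rankOneProj ψ₀) (t * y / 2) * expGate H (Real.pi / 2) *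
        expGate (rankOneProj ψ₀) (-(t * x / 2)) * expGate H (-Real.pi) *
        expGate (rankOneProj ψ₀) (t * x / 2) * expGate H (-(Real.pi / 2)) *
        expGate (rankOneProj ψ₀) (-(t * y / 2)) * expGate H Real.pi * U) :
    γ 0 = U ∧
    HasDerivWithinAt γ (((x : ℂ) • X₀ + (y : ℂ) • Y₀) * U) (Set.Ici (0 : ℝ)) 0 :=
  stmt_10_general H hProj ψ₀ X₀ Y₀ hX₀ hY₀ x y U γ hγ
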